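/- Let h and k be coprime positive integers, let n be an integer, and let ν be a real number with 0 < ν < 1. Then s*(h,k;(n+ν)/k,0) + (1/2)·{(n+ν)/k} = s*(h,k;n/k,0) + (1/2)·{n/k}. -/

import Mathlib

open Real

/-- The modified sawtooth function `B̄₁*(x) = x − ⌊x⌋ − 1/2` for all real `x`. -/
noncomputable def sawtoothStar (x : ℝ) : ℝ := Int.fract x - 1/2

/-- The modified Dedekind–Rademacher sum
`s*(h,k;y,x) = Σ_{r=0}^{k−1} B̄₁*(h(r+x)/k + y)·B̄₁*((r+x)/k)`. -/
noncomputable def modDedekindRademacher (h k : ℕ) (y x : ℝ) : ℝ :=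
  ∑ r ∈ Finset.range k,
    sawtoothStar ((h : ℝ) * ((r : ℝ) + x) / k + y) * sawtoothStar (((r : ℝ) + x) / k)

/-! For `0 ≤ ε < 1` no multiple of `1/k` lies in `(m/k, (m+ε)/k]`, so every
`B̄₁*(j + ·)` with `j ∈ (1/k)ℤ` increases by exactly `ε/k` from `m/k` to `(m+ε)/k`. Moving
`y = n/k` to `(n+ν)/k` thus changes `s*(h,k;y,0)` by `(ν/k)·Σ_r B̄₁*(r/k) = -ν/(2k)`,
while `(1/2){y}` grows by `ν/(2k)`. -/

lemma floor_intCast_add_div_natCast (m : ℤ) (k : ℕ) {ε : ℝ} (hε0 : 0 ≤ ε) (hε1 : ε < 1) :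
    ⌊((m : ℝ) + ε) / k⌋ = ⌊(m : ℝ) / k⌋ := by
  rw [Int.floor_div_natCast, Int.floor_div_natCast, Int.floor_intCast,
    Int.floor_intCast_add, Int.floor_eq_zero_iff.mpr ⟨hε0, hε1⟩, add_zero]

lemma fract_intCast_add_div_natCast (m : ℤ) (k : ℕ) {ε : ℝ} (hε0 : 0 ≤ ε) (hε1 : ε < 1) :
    Int.fract (((m : ℝ) + ε) / k) = Int.fract ((m : ℝ) / k) + ε / k := by
  rw [Int.fract, Int.fract, floor_intCast_add_div_natCast m k hε0 hε1]
  ring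

lemma sawtoothStar_intCast_add_div_natCast (m : ℤ) (k : ℕ) {ε : ℝ} (hε0 : 0 ≤ ε)
    (hε1 : ε < 1) :
    sawtoothStar (((m : ℝ) + ε) / k) = sawtoothStar ((m : ℝ) / k) + ε / k := by
  rw [sawtoothStar, sawtoothStar, fract_intCast_add_div_natCast m k hε0 hε1]
  ring

lemma sum_range_sawtoothStar_div (k : ℕ) (hk : 0 < k) :
    ∑ r ∈ Finset.range k, sawtoothStar ((r : ℝ) / k) = -(1 / 2) := by
  have hk' : (0 : ℝ) < k := by exact_mod_cast hk
  have hterm : ∀ r ∈ Finset.range k, sawtoothStar ((r : ℝ) / k) = (r : ℝ) / k - 1 / 2 := by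
    intro r hr
    rw [sawtoothStar, Int.fract_eq_self.mpr ⟨by positivity, ?_⟩]
    rw [div_lt_one hk']
    exact_mod_cast Finset.mem_range.mp hr
  have hgauss : (∑ r ∈ Finset.range k, (r : ℝ)) * 2 = k * (k - 1) := by
    rw [← Nat.cast_sum, ← Nat.cast_ofNat, ← Nat.cast_mul, Finset.sum_range_id_mul_two,
      Nat.cast_mul, Nat.cast_pred hk]
  rw [Finset.sum_congr rfl hterm, Finset.sum_sub_distrib, ← Finset.sum_div, Finset.sum_const,
    Finset.card_range, nsmul_eq_mul]
  field_simp
  linarith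

lemma modDedekindRademacher_intCast_add_div (h k : ℕ) (n : ℤ) {ε : ℝ} (hε0 : 0 ≤ ε)
    (hε1 : ε < 1) :
    modDedekindRademacher h k (((n : ℝ) + ε) / k) 0 =
      modDedekindRademacher h k ((n : ℝ) / k) 0 +
        ε / k * ∑ r ∈ Finset.range k, sawtoothStar ((r : ℝ) / k) := by
  simp only [modDedekindRademacher, add_zero, Finset.mul_sum, ← Finset.sum_add_distrib]
  refine Finset.sum_congr rfl fun r _ => ?_
  have hshift : ∀ δ : ℝ,
      (h : ℝ) * r / k + ((n : ℝ) + δ) / k = (((h * r : ℕ) + n : ℤ) + δ) / k := by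
    intro δ; push_cast; ring
  rw [hshift, ← add_zero ((n : ℝ)), hshift, add_zero,
    sawtoothStar_intCast_add_div_natCast _ k hε0 hε1]
  ring

theorem modDedekindRademacher_piecewise_constant_general (h k : ℕ) (hk : 0 < k)
    (n : ℤ) (ν : ℝ) (hν0 : 0 < ν) (hν1 : ν < 1) :
    modDedekindRademacher h k (((n : ℝ) + ν) / k) 0
      + 1/2 * Int.fract (((n : ℝ) + ν) / k) =
    modDedekindRademacher h k ((n : ℝ) / k) 0 + 1/2 * Int.fract ((n : ℝ) / k) := by
  rw [modDedekindRademacher_intCast_add_div h k n hν0.le hν1, sum_range_sawtoothStar_div k hk,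
    fract_intCast_add_div_natCast n k hν0.le hν1]
  ring

/-- Knuth's identity: for coprime positive integers `h, k`, an integer `n`, and
`0 < ν < 1`, `s*(h,k;(n+ν)/k,0) + (1/2){(n+ν)/k} = s*(h,k;n/k,0) + (1/2){n/k}`. -/
theorem modDedekindRademacher_piecewise_constant (h k : ℕ) (hh : 0 < h) (hk : 0 < k)
    (hco : Nat.Coprime h k) (n : ℤ) (ν : ℝ) (hν0 : 0 < ν) (hν1 : ν < 1) :
    modDedekindRademacher h k (((n : ℝ) + ν) / k) 0
      + 1/2 * Int.fract (((n : ℝ) + ν) / k) =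
    modDedekindRademacher h k ((n : ℝ) / k) 0 + 1/2 * Int.fract ((n : ℝ) / k) :=
  modDedekindRademacher_piecewise_constant_general h k hk n ν hν0 hν1
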